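/- Certificate lower bound on the primal objective. Let Z_r = Σ_{ℓ=0}^{L−1} α_ℓ · u a(r_ℓ)^H with ‖u‖₂ = 1 and nonzero α_ℓ, let Z_c = Σ_{q=0}^{Q−1} β_q · w a(c_q)^H with ‖w‖₂ = 1 and nonzero β_q, and set y = א_r(Z_r) + א_c(Z_c). If q ∈ ℂ^(MP) satisfies א_r*(q) a(r_ℓ) = sign(α_ℓ) · u for every ℓ and א_c*(q) a(c_q) = sign(β_q) · w for every q, then ⟨q, y⟩_ℝ ≥ ‖Z_r‖_A + ‖Z_c‖_A. -/

import Mathlib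

/-!
Pairing `q` with `y` moves the measurement operators onto `q` as adjoints, and the interpolation
conditions make `⟨א*(q), Σ α_ℓ u a(r_ℓ)ᴴ⟩` equal to `Σ |α_ℓ|` exactly. That sum is the cost of
one admissible decomposition, hence bounds the atomic norm from above.
-/

open scoped BigOperators ComplexConjugate ENNReal Matrix

noncomputable section

namespace DBD

/-- Index set for `ℂ^(MP)` with `M = 2N+1`: pairs `v = (n,p)`,
`n ∈ {-N,…,N}` (encoded via `Fin (2N+1)` shifted by `N`) and `p ∈ {0,…,P-1}`. -/
abbrev Idx (N P : ℕ) := Fin (2 * N + 1) × Fin P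

/-- The atom vector `a(r) ∈ ℂ^(MP)` with `[a(r)]_(n,p) = exp(2πi(τ n + ν p))`,
where the first index encodes `n = v.1 - N ∈ {-N,…,N}`. -/
def atom (N P : ℕ) (r : ℝ × ℝ) : Idx N P → ℂ := fun v =>
  Complex.exp (2 * (Real.pi : ℂ) * Complex.I *
    ((r.1 : ℂ) * (((((v.1 : ℕ) : ℤ) - (N : ℤ)) : ℤ) : ℂ) + (r.2 : ℂ) * ((v.2 : ℕ) : ℂ)))

/-- The parameter domain `[0,1)²`. -/
def box : Set (ℝ × ℝ) := Set.Ico (0 : ℝ) 1 ×ˢ Set.Ico (0 : ℝ) 1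

/-- The rank-one atom matrix `u a(r)ᴴ ∈ ℂ^(d×MP)`. -/
def atomMat (N P : ℕ) {d : ℕ} (u : Fin d → ℂ) (r : ℝ × ℝ) :
    Matrix (Fin d) (Idx N P) ℂ := fun i v => u i * conj (atom N P r v)

/-- Euclidean (ℓ₂) norm on `ℂ^d`. -/
def enorm2 {d : ℕ} (x : Fin d → ℂ) : ℝ := Real.sqrt (∑ i, ‖x i‖ ^ 2)

/-- The atomic norm `‖Z‖_A ∈ [0,∞]`: infimum of `Σ_ℓ |α_ℓ|` over decompositions
`Z = Σ_ℓ α_ℓ · u a(r_ℓ)ᴴ` with a single unit-norm `u` and `r_ℓ ∈ [0,1)²`;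
`+∞` (the infimum over the empty set) if no decomposition exists. -/
def anorm (N P : ℕ) {d : ℕ} (Z : Matrix (Fin d) (Idx N P) ℂ) : ℝ≥0∞ :=
  sInf {x : ℝ≥0∞ | ∃ (L : ℕ) (α : Fin L → ℂ) (rs : Fin L → ℝ × ℝ) (u : Fin d → ℂ),
    enorm2 u = 1 ∧ (∀ ℓ, rs ℓ ∈ box) ∧
    Z = ∑ ℓ, α ℓ • atomMat N P u (rs ℓ) ∧
    x = ENNReal.ofReal (∑ ℓ, ‖α ℓ‖)}

/-- Standard inner product `⟨x,y⟩ = xᴴ y` on `ℂ^(MP)`. -/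
def vinner (N P : ℕ) (x y : Idx N P → ℂ) : ℂ := ∑ v, conj (x v) * y v

/-- Frobenius inner product `⟨A,B⟩ = Tr(Aᴴ B)`. -/
def finner {m n : Type*} [Fintype m] [Fintype n] (A B : Matrix m n ℂ) : ℂ :=
  (Aᴴ * B).trace

/-- `sign(c) = c / |c|` for complex `c`. -/
def csign (c : ℂ) : ℂ := c / (‖c‖ : ℂ)

/-- The trace-form measurement operator `[א(Z)]_v = Tr(G_v Z)`. -/
def aleph (N P : ℕ) {d : ℕ} (G : Idx N P → Matrix (Idx N P) (Fin d) ℂ)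
    (Z : Matrix (Fin d) (Idx N P) ℂ) : Idx N P → ℂ := fun v => (G v * Z).trace

/-- The adjoint operator `א*(q) = Σ_v [q]_v G_vᴴ`. -/
def alephAdj (N P : ℕ) {d : ℕ} (G : Idx N P → Matrix (Idx N P) (Fin d) ℂ)
    (q : Idx N P → ℂ) : Matrix (Fin d) (Idx N P) ℂ := ∑ v, q v • (G v)ᴴ

/-- The dual atomic norm `‖W‖*_A = sup{ ⟨U,W⟩_ℝ : ‖U‖_A ≤ 1 }`. -/
def dualNorm (N P : ℕ) {d : ℕ} (W : Matrix (Fin d) (Idx N P) ℂ) : ℝ :=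
  sSup {x : ℝ | ∃ U : Matrix (Fin d) (Idx N P) ℂ, anorm N P U ≤ 1 ∧ x = (finner U W).re}

end DBD

open DBD

namespace DBD

theorem anorm_le_ofReal_sum_norm (N P : ℕ) {d L : ℕ} (α : Fin L → ℂ) (rs : Fin L → ℝ × ℝ)
    {u : Fin d → ℂ} (hu : enorm2 u = 1) (hrs : ∀ ℓ, rs ℓ ∈ box) :
    anorm N P (∑ ℓ, α ℓ • atomMat N P u (rs ℓ)) ≤ ENNReal.ofReal (∑ ℓ, ‖α ℓ‖) :=
  sInf_le ⟨L, α, rs, u, hu, hrs, rfl, rfl⟩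

theorem vinner_add_right (N P : ℕ) (q y z : Idx N P → ℂ) :
    vinner N P q (y + z) = vinner N P q y + vinner N P q z := by
  simp only [vinner, Pi.add_apply, mul_add, Finset.sum_add_distrib]

theorem vinner_aleph (N P : ℕ) {d : ℕ} (G : Idx N P → Matrix (Idx N P) (Fin d) ℂ)
    (q : Idx N P → ℂ) (Z : Matrix (Fin d) (Idx N P) ℂ) :
    vinner N P q (aleph N P G Z) = finner (alephAdj N P G q) Z := by
  simp only [vinner, aleph, finner, alephAdj, Matrix.conjTranspose_sum, Matrix.sum_mul,
    Matrix.trace_sum, Matrix.conjTranspose_smul, Matrix.conjTranspose_conjTranspose,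
    Matrix.smul_mul, Matrix.trace_smul, smul_eq_mul]
  rfl

theorem finner_sum_smul {m n ι : Type*} [Fintype m] [Fintype n] (W : Matrix m n ℂ)
    (s : Finset ι) (c : ι → ℂ) (B : ι → Matrix m n ℂ) :
    finner W (∑ i ∈ s, c i • B i) = ∑ i ∈ s, c i * finner W (B i) := by
  simp only [finner, Matrix.mul_sum, Matrix.mul_smul, Matrix.trace_sum, Matrix.trace_smul,
    smul_eq_mul]

theorem finner_atomMat (N P : ℕ) {d : ℕ} (W : Matrix (Fin d) (Idx N P) ℂ)
    (u : Fin d → ℂ) (r : ℝ × ℝ) :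
    finner W (atomMat N P u r) = star (W *ᵥ atom N P r) ⬝ᵥ u := by
  simp only [finner, Matrix.trace, Matrix.diag, Matrix.mul_apply, Matrix.conjTranspose_apply,
    atomMat, dotProduct, Pi.star_apply, Matrix.mulVec, star_sum, star_mul', Finset.sum_mul]
  rw [Finset.sum_comm]
  refine Finset.sum_congr rfl fun i _ => Finset.sum_congr rfl fun v _ => ?_
  simp only [RCLike.star_def]
  ring

theorem star_dotProduct_self {d : ℕ} (x : Fin d → ℂ) :
    star x ⬝ᵥ x = ((enorm2 x ^ 2 : ℝ) : ℂ) := by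
  rw [enorm2, Real.sq_sqrt (Finset.sum_nonneg fun i _ => sq_nonneg _)]
  simp only [dotProduct, Pi.star_apply, RCLike.star_def, Complex.conj_mul', Complex.ofReal_sum,
    Complex.ofReal_pow]

theorem mul_conj_csign (c : ℂ) : c * conj (csign c) = ‖c‖ := by
  rw [csign, map_div₀, Complex.conj_ofReal, mul_div_assoc', Complex.mul_conj', sq,
    mul_self_div_self]

theorem finner_eq_sum_norm_of_interp (N P : ℕ) {d L : ℕ} (W : Matrix (Fin d) (Idx N P) ℂ)
    (α : Fin L → ℂ) (rs : Fin L → ℝ × ℝ) {u : Fin d → ℂ} (hu : enorm2 u = 1)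
    (hW : ∀ ℓ, W *ᵥ atom N P (rs ℓ) = csign (α ℓ) • u) :
    finner W (∑ ℓ, α ℓ • atomMat N P u (rs ℓ)) = ((∑ ℓ, ‖α ℓ‖ : ℝ) : ℂ) := by
  rw [finner_sum_smul, Complex.ofReal_sum]
  refine Finset.sum_congr rfl fun ℓ _ => ?_
  rw [finner_atomMat, hW ℓ, star_smul, smul_dotProduct, star_dotProduct_self, hu, one_pow,
    Complex.ofReal_one, smul_eq_mul, mul_one, RCLike.star_def, mul_conj_csign]

end DBD

theorem certificate_lower_bound_general
    (N P J : ℕ) (L Q : ℕ)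
    (G : Idx N P → Matrix (Idx N P) (Fin J) ℂ)
    (A : Idx N P → Matrix (Idx N P) (Fin (P * J)) ℂ)
    (α : Fin L → ℂ) (rs : Fin L → ℝ × ℝ) (u : Fin J → ℂ)
    (β : Fin Q → ℂ) (cs : Fin Q → ℝ × ℝ) (w : Fin (P * J) → ℂ)
    (hu : enorm2 u = 1) (hw : enorm2 w = 1)
    (hrs : ∀ ℓ, rs ℓ ∈ box) (hcs : ∀ k, cs k ∈ box)
    (Zr : Matrix (Fin J) (Idx N P) ℂ) (Zc : Matrix (Fin (P * J)) (Idx N P) ℂ)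
    (hZr : Zr = ∑ ℓ, α ℓ • atomMat N P u (rs ℓ))
    (hZc : Zc = ∑ k, β k • atomMat N P w (cs k))
    (y : Idx N P → ℂ)
    (hy : y = fun v => aleph N P G Zr v + aleph N P A Zc v)
    (q : Idx N P → ℂ)
    (hfr_interp : ∀ ℓ, (alephAdj N P G q).mulVec (atom N P (rs ℓ)) = csign (α ℓ) • u)
    (hfc_interp : ∀ k, (alephAdj N P A q).mulVec (atom N P (cs k)) = csign (β k) • w) :
    anorm N P Zr + anorm N P Zc ≤ ENNReal.ofReal ((vinner N P q y).re) := by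
  have hpair : (vinner N P q y).re = (∑ ℓ, ‖α ℓ‖) + ∑ k, ‖β k‖ := by
    rw [hy, show (fun v => aleph N P G Zr v + aleph N P A Zc v)
        = aleph N P G Zr + aleph N P A Zc from rfl, vinner_add_right, vinner_aleph,
      vinner_aleph, hZr, hZc, finner_eq_sum_norm_of_interp N P _ α rs hu hfr_interp,
      finner_eq_sum_norm_of_interp N P _ β cs hw hfc_interp, ← Complex.ofReal_add,
      Complex.ofReal_re]
  rw [hpair, ENNReal.ofReal_add (Finset.sum_nonneg fun _ _ => norm_nonneg _)
    (Finset.sum_nonneg fun _ _ => norm_nonneg _), hZr, hZc]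
  exact add_le_add (anorm_le_ofReal_sum_norm N P α rs hu hrs)
    (anorm_le_ofReal_sum_norm N P β cs hw hcs)

/-- **Certificate lower bound on the primal objective:** under the interpolation
conditions of the dual certificate, `⟨q, y⟩_ℝ ≥ ‖Z_r‖_A + ‖Z_c‖_A`. -/
theorem certificate_lower_bound
    (N P J : ℕ) (hN : 0 < N) (hP : 0 < P) (hJ : 0 < J) (L Q : ℕ)
    (G : Idx N P → Matrix (Idx N P) (Fin J) ℂ)
    (A : Idx N P → Matrix (Idx N P) (Fin (P * J)) ℂ)
    (α : Fin L → ℂ) (rs : Fin L → ℝ × ℝ) (u : Fin J → ℂ)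
    (β : Fin Q → ℂ) (cs : Fin Q → ℝ × ℝ) (w : Fin (P * J) → ℂ)
    (hu : enorm2 u = 1) (hw : enorm2 w = 1)
    (hα : ∀ ℓ, α ℓ ≠ 0) (hβ : ∀ k, β k ≠ 0)
    (hrs : ∀ ℓ, rs ℓ ∈ box) (hcs : ∀ k, cs k ∈ box)
    (Zr : Matrix (Fin J) (Idx N P) ℂ) (Zc : Matrix (Fin (P * J)) (Idx N P) ℂ)
    (hZr : Zr = ∑ ℓ, α ℓ • atomMat N P u (rs ℓ))
    (hZc : Zc = ∑ k, β k • atomMat N P w (cs k))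
    (y : Idx N P → ℂ)
    (hy : y = fun v => aleph N P G Zr v + aleph N P A Zc v)
    (q : Idx N P → ℂ)
    (hfr_interp : ∀ ℓ, (alephAdj N P G q).mulVec (atom N P (rs ℓ)) = csign (α ℓ) • u)
    (hfc_interp : ∀ k, (alephAdj N P A q).mulVec (atom N P (cs k)) = csign (β k) • w) :
    anorm N P Zr + anorm N P Zc ≤ ENNReal.ofReal ((vinner N P q y).re) :=
  certificate_lower_bound_general N P J L Q G A α rs u β cs w hu hw hrs hcs Zr Zc hZr hZc y hy q
    hfr_interp hfc_interp
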